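/- arXiv:1408.5306 — 2 statements merged into one kernel-verified Lean document; each statement's English description precedes it below -/
import Mathlib

section
/- Let G be a symmetric 4-linear form on ℝⁿ, L(y) = G(y,y,y,y), U, V ∈ ℝⁿ, ℓ ≠ 0, with L(ℓU + V) = 0 and L(ℓU − V) = 0, and suppose G(V,U,U,U) ≠ 0. Then the sixth-order polynomial necessary condition holds: G(U,U,U,U)·G(V,V,V,U)² + G(V,V,V,V)·G(V,U,U,U)² − 6 G(V,V,U,U)·G(V,V,V,U)·G(V,U,U,U) = 0. -/
/-!
Expanding `L(ℓU ± V)` binomially, the difference of the two radar conditions isolates the odd part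
`8ℓ(ℓ² G(V,U,U,U) + G(V,V,V,U))` and the sum the even part `2(ℓ⁴ L(U) + 6ℓ² G(V,V,U,U) + L(V))`.
Since `ℓ ≠ 0`, `ℓ²` is a common root of a linear and a quadratic polynomial, so their resultant,
which is the stated sextic expression, vanishes.
-/

theorem resultant_linear_quadratic_eq_zero {R : Type*} [CommRing R] {t a b p c q : R}
    (hlin : t * a + b = 0) (hquad : t ^ 2 * p + 6 * t * c + q = 0) :
    p * b ^ 2 + q * a ^ 2 - 6 * c * b * a = 0 := by
  linear_combination a ^ 2 * hquad + (p * (b - t * a) - 6 * c * a) * hlin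

section SymmetricQuarticForm

variable {R M : Type*} [CommRing R] [AddCommGroup M] [Module R M]
  {G : M →ₗ[R] M →ₗ[R] M →ₗ[R] M →ₗ[R] R}
  (hs1 : ∀ a b c d, G a b c d = G b a c d)
  (hs2 : ∀ a b c d, G a b c d = G a c b d)
  (hs3 : ∀ a b c d, G a b c d = G a b d c)
include hs1 hs2 hs3

theorem quartic_smul_add_smul (s t : R) (x y : M) :
    G (s • x + t • y) (s • x + t • y) (s • x + t • y) (s • x + t • y) =
      s ^ 4 * G x x x x + 4 * s ^ 3 * t * G y x x x + 6 * s ^ 2 * t ^ 2 * G y y x x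
        + 4 * s * t ^ 3 * G y y y x + t ^ 4 * G y y y y := by
  have swap1 : ∀ c d, G x y c d = G y x c d := hs1 x y
  have swap2 : ∀ a d, G a x y d = G a y x d := fun a => hs2 a x y
  have swap3 : ∀ a b, G a b x y = G a b y x := fun a b => hs3 a b x y
  simp only [map_add, map_smul, LinearMap.add_apply, LinearMap.smul_apply, smul_eq_mul,
    swap1, swap2, swap3]
  ring

theorem quartic_smul_add_sub_quartic_smul_sub (s : R) (x y : M) :
    G (s • x + y) (s • x + y) (s • x + y) (s • x + y)
        - G (s • x - y) (s • x - y) (s • x - y) (s • x - y) =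
      8 * s * (s ^ 2 * G y x x x + G y y y x) := by
  have hplus := quartic_smul_add_smul hs1 hs2 hs3 s 1 x y
  have hminus := quartic_smul_add_smul hs1 hs2 hs3 s (-1) x y
  rw [one_smul] at hplus
  rw [neg_one_smul, ← sub_eq_add_neg] at hminus
  rw [hplus, hminus]
  ring

theorem quartic_smul_add_add_quartic_smul_sub (s : R) (x y : M) :
    G (s • x + y) (s • x + y) (s • x + y) (s • x + y)
        + G (s • x - y) (s • x - y) (s • x - y) (s • x - y) =
      2 * (s ^ 4 * G x x x x + 6 * s ^ 2 * G y y x x + G y y y y) := by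
  have hplus := quartic_smul_add_smul hs1 hs2 hs3 s 1 x y
  have hminus := quartic_smul_add_smul hs1 hs2 hs3 s (-1) x y
  rw [one_smul] at hplus
  rw [neg_one_smul, ← sub_eq_add_neg] at hminus
  rw [hplus, hminus]
  ring

end SymmetricQuarticForm

theorem quartic_radar_necessary_condition_general
    (n : ℕ)
    (G : (Fin n → ℝ) →ₗ[ℝ] (Fin n → ℝ) →ₗ[ℝ] (Fin n → ℝ) →ₗ[ℝ] (Fin n → ℝ) →ₗ[ℝ] ℝ)
    (hs1 : ∀ a b c d, G a b c d = G b a c d)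
    (hs2 : ∀ a b c d, G a b c d = G a c b d)
    (hs3 : ∀ a b c d, G a b c d = G a b d c)
    (U V : Fin n → ℝ) (ℓ : ℝ) (hℓ : ℓ ≠ 0)
    (h1 : G (ℓ • U + V) (ℓ • U + V) (ℓ • U + V) (ℓ • U + V) = 0)
    (h2 : G (ℓ • U - V) (ℓ • U - V) (ℓ • U - V) (ℓ • U - V) = 0) :
    G U U U U * (G V V V U) ^ 2 + G V V V V * (G V U U U) ^ 2
      - 6 * G V V U U * G V V V U * G V U U U = 0 := by
  have hlin : ℓ ^ 2 * G V U U U + G V V V U = 0 := by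
    have hodd := quartic_smul_add_sub_quartic_smul_sub hs1 hs2 hs3 ℓ U V
    rw [h1, h2, sub_zero, eq_comm] at hodd
    exact (mul_eq_zero.mp hodd).resolve_left (mul_ne_zero (by norm_num) hℓ)
  have hquad : (ℓ ^ 2) ^ 2 * G U U U U + 6 * ℓ ^ 2 * G V V U U + G V V V V = 0 := by
    have heven := quartic_smul_add_add_quartic_smul_sub hs1 hs2 hs3 ℓ U V
    rw [h1, h2] at heven
    linear_combination -heven / 2
  exact resultant_linear_quadratic_eq_zero hlin hquad

theorem quartic_radar_necessary_condition
    (n : ℕ)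
    (G : (Fin n → ℝ) →ₗ[ℝ] (Fin n → ℝ) →ₗ[ℝ] (Fin n → ℝ) →ₗ[ℝ] (Fin n → ℝ) →ₗ[ℝ] ℝ)
    (hs1 : ∀ a b c d, G a b c d = G b a c d)
    (hs2 : ∀ a b c d, G a b c d = G a c b d)
    (hs3 : ∀ a b c d, G a b c d = G a b d c)
    (U V : Fin n → ℝ) (ℓ : ℝ) (hℓ : ℓ ≠ 0)
    (h1 : G (ℓ • U + V) (ℓ • U + V) (ℓ • U + V) (ℓ • U + V) = 0)
    (h2 : G (ℓ • U - V) (ℓ • U - V) (ℓ • U - V) (ℓ • U - V) = 0)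
    (hne : G V U U U ≠ 0) :
    G U U U U * (G V V V U) ^ 2 + G V V V V * (G V U U U) ^ 2
      - 6 * G V V U U * G V V V U * G V U U U = 0 :=
  quartic_radar_necessary_condition_general n G hs1 hs2 hs3 U V ℓ hℓ h1 h2
end

section
/- Define L : ℝ³ → ℝ by L(y⁰,y¹,y²) = −(y⁰)⁴ + (y¹)⁴ + (y²)⁴ + (y⁰)²((y¹)² + (y²)²). Let U = (1,0,0) and V = (0,1,0). Then the radar length ℓ of V with respect to U satisfies ℓ² = (1 + √5)/2, i.e. with ℓ = √((1+√5)/2) one has L(ℓU + V) = 0 and L(ℓU − V) = 0; in particular ℓ² > 1, so the Finslerian radar length exceeds the Minkowski value 1. -/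
theorem example_quartic_radar_length_golden_ratio :
    let L : (Fin 3 → ℝ) → ℝ := fun y =>
      -(y 0) ^ 4 + (y 1) ^ 4 + (y 2) ^ 4 + (y 0) ^ 2 * ((y 1) ^ 2 + (y 2) ^ 2)
    let U : Fin 3 → ℝ := ![1, 0, 0]
    let V : Fin 3 → ℝ := ![0, 1, 0]
    let ℓ : ℝ := Real.sqrt ((1 + Real.sqrt 5) / 2)
    L (ℓ • U + V) = 0 ∧ L (ℓ • U - V) = 0 ∧ (1 : ℝ) < (1 + Real.sqrt 5) / 2 := by
  intro L U V ℓ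
  have h5 : Real.sqrt 5 ^ 2 = 5 := Real.sq_sqrt (by norm_num)
  have h5pos : (0:ℝ) < Real.sqrt 5 := Real.sqrt_pos.mpr (by norm_num)
  have hnn : (0:ℝ) ≤ (1 + Real.sqrt 5) / 2 := by positivity
  have hℓ2 : ℓ ^ 2 = (1 + Real.sqrt 5) / 2 := Real.sq_sqrt hnn
  have hℓ4 : ℓ ^ 4 = ℓ ^ 2 * ℓ ^ 2 := by ring
  refine ⟨?_, ?_, ?_⟩
  · simp only [L, U, V]
    simp [Matrix.cons_val_zero, Matrix.cons_val_one]
    nlinarith [hℓ2, h5]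
  · simp only [L, U, V]
    simp [Matrix.cons_val_zero, Matrix.cons_val_one]
    nlinarith [hℓ2, h5]
  · have : (1:ℝ) < Real.sqrt 5 := by
      nlinarith [h5, h5pos]
    linarith
end
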